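/- Let S : H₂ →L[ℂ] H₁ be bounded, m ∈ ℝ, λ > 0, and D_m(φ,ψ) = (mφ + Sψ, S*φ - mψ). If ψ ∈ ker(S* S - λ) with ψ ≠ 0, then the vector Ψ = (Sψ, -(m + √(λ+m²))ψ) is nonzero and satisfies D_m Ψ = -√(λ+m²)·Ψ. -/

import Mathlib

open ContinuousLinearMap MeasureTheory

variable {H₁ H₂ : Type*}
  [NormedAddCommGroup H₁] [InnerProductSpace ℂ H₁] [CompleteSpace H₁]
  [NormedAddCommGroup H₂] [InnerProductSpace ℂ H₂] [CompleteSpace H₂]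

local notation "e" => WithLp.equiv 2 (H₁ × H₂)

/-! With `μ = √(λ + m²)`, the first component of `D_m Ψ = -μ Ψ` is linearity of `S`, and the
second reduces, via `S* S ψ = λ ψ`, to the scalar identity `μ² = λ + m²`. The vector is nonzero
because `λ > 0` forces `μ > |m|`, so the coefficient `-(m + μ)` of `ψ` does not vanish. -/

theorem Real.add_sqrt_add_sq_pos {lam : ℝ} (hlam : 0 < lam) (m : ℝ) :
    0 < m + √(lam + m ^ 2) := by
  have : |m| < √(lam + m ^ 2) := by
    rw [← Real.sqrt_sq_eq_abs]
    exact Real.sqrt_lt_sqrt (sq_nonneg m) (by linarith)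
  linarith [neg_abs_le m]

theorem block_map_eigenvector {R M₁ M₂ : Type*} [CommRing R]
    [AddCommGroup M₁] [Module R M₁] [AddCommGroup M₂] [Module R M₂]
    (S : M₂ →ₗ[R] M₁) (T : M₁ →ₗ[R] M₂) {m lam μ : R} {ψ : M₂}
    (hψ : T (S ψ) = lam • ψ) (hμ : μ ^ 2 = lam + m ^ 2) :
    (m • S ψ + S (-(m + μ) • ψ), T (S ψ) - m • (-(m + μ) • ψ)) =
      -μ • (S ψ, -(m + μ) • ψ) := by
  refine Prod.ext ?_ ?_
  · simp only [map_smul, Prod.smul_fst, ← add_smul]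
    congr 1
    ring
  · simp only [hψ, Prod.smul_snd, smul_smul, ← sub_smul]
    congr 1
    linear_combination -hμ

theorem eigvec_minus (S : H₂ →L[ℂ] H₁) (m : ℝ) (lam : ℝ) (hlam : 0 < lam)
    (D : WithLp 2 (H₁ × H₂) →L[ℂ] WithLp 2 (H₁ × H₂))
    (hD : ∀ (φ : H₁) (ψ : H₂), D ((e).symm (φ, ψ)) =
      (e).symm ((m : ℂ) • φ + S ψ, (adjoint S) φ - (m : ℂ) • ψ))
    (ψ : H₂) (hψ : ψ ≠ 0) (hker : (adjoint S) (S ψ) = (lam : ℂ) • ψ) :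
    (e).symm (S ψ, -(((m : ℂ) + (Real.sqrt (lam + m ^ 2) : ℂ))) • ψ) ≠ 0 ∧
    D ((e).symm (S ψ, -(((m : ℂ) + (Real.sqrt (lam + m ^ 2) : ℂ))) • ψ)) =
      (-(Real.sqrt (lam + m ^ 2) : ℂ)) •
        (e).symm (S ψ, -(((m : ℂ) + (Real.sqrt (lam + m ^ 2) : ℂ))) • ψ) := by
  have hμ : ((√(lam + m ^ 2) : ℝ) : ℂ) ^ 2 = lam + (m : ℂ) ^ 2 := by
    exact_mod_cast Real.sq_sqrt (by positivity : 0 ≤ lam + m ^ 2)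
  have hmμ : (m : ℂ) + (√(lam + m ^ 2) : ℝ) ≠ 0 := by
    exact_mod_cast (Real.add_sqrt_add_sq_pos hlam m).ne'
  refine ⟨?_, ?_⟩
  · rw [Ne, WithLp.equiv_symm_apply, WithLp.toLp_eq_zero, Prod.mk_eq_zero]
    exact fun h ↦ hψ ((smul_eq_zero.mp h.2).resolve_left (neg_ne_zero.mpr hmμ))
  · rw [hD, WithLp.equiv_symm_apply, ← WithLp.toLp_smul]
    exact congrArg _ (block_map_eigenvector (S : H₂ →ₗ[ℂ] H₁) (adjoint S : H₁ →ₗ[ℂ] H₂) hker hμ)
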